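/- Let G be a simple graph in which every edge lies in a 3-clique, and suppose G is 2-robustly 3-colourable. Then C(G) is 2-robustly 1-in-3 satisfiable in the following sense: for any two distinct variables (i,j) and (i',j') of C(G) and any Boolean values b, b' such that it is not the case that b = b' = true and the two variables occur together in some clause of C(G), there is an assignment ν that 1-in-3 satisfies C(G) with ν(i,j) = b and ν(i',j') = b'. (Two distinct variables (i,j) and (i',j') occur together in a clause of C(G) iff i = i', or j = j' and i is adjacent to i' in G.) -/

import Mathlib

/-- Exactly one of three Boolean values is `true`. -/
def oneOf3 (a b c : Bool) : Prop :=
  (a = true ∧ b = false ∧ c = false) ∨ (a = false ∧ b = true ∧ c = false) ∨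
  (a = false ∧ b = false ∧ c = true)

/-- `ν` 1-in-3 satisfies the monotone 1-in-3 instance `C(G)`. -/
def CSat {V : Type} (G : SimpleGraph V) (ν : V × Fin 3 → Bool) : Prop :=
  (∀ i : V, oneOf3 (ν (i, 0)) (ν (i, 1)) (ν (i, 2))) ∧
  (∀ i₁ i₂ i₃ : V, G.Adj i₁ i₂ → G.Adj i₁ i₃ → G.Adj i₂ i₃ →
    ∀ j : Fin 3, oneOf3 (ν (i₁, j)) (ν (i₂, j)) (ν (i₃, j)))

/-!
A proper 3-colouring `c` gives the satisfying assignment `ν (i, j) = decide (c i = j)`: each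
vertex gets exactly one colour, and a triangle uses each colour exactly once. So it suffices to
turn the prescribed values of `ν` at `(i, j)` and `(i', j')` into colours for `i` and `i'`
that the 2-robustness hypothesis accepts.
-/

lemma oneOf3_decide_eq (x : Fin 3) :
    oneOf3 (decide (x = 0)) (decide (x = 1)) (decide (x = 2)) := by
  unfold oneOf3; revert x; decide

lemma oneOf3_decide_eq_of_pairwise_ne {a b c : Fin 3} (hab : a ≠ b) (hac : a ≠ c) (hbc : b ≠ c)
    (j : Fin 3) : oneOf3 (decide (a = j)) (decide (b = j)) (decide (c = j)) := by
  unfold oneOf3; revert a b c j; decide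

lemma csat_decide_eq_of_proper {V : Type} {G : SimpleGraph V} {c : V → Fin 3}
    (hc : ∀ x y, G.Adj x y → c x ≠ c y) : CSat G (fun p => decide (c p.1 = p.2)) :=
  ⟨fun i => oneOf3_decide_eq (c i), fun _ _ _ h₁₂ h₁₃ h₂₃ =>
    oneOf3_decide_eq_of_pairwise_ne (hc _ _ h₁₂) (hc _ _ h₁₃) (hc _ _ h₂₃)⟩

lemma exists_decide_eq {α : Type*} [DecidableEq α] [Nontrivial α] (j : α) (b : Bool) :
    ∃ c : α, decide (c = j) = b := by
  cases b
  · simpa using exists_ne j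
  · exact ⟨j, decide_eq_true rfl⟩

lemma Fin3.exists_decide_eq_pair {j j' : Fin 3} (hj : j ≠ j') {b b' : Bool}
    (hb : ¬(b = true ∧ b' = true)) : ∃ c : Fin 3, decide (c = j) = b ∧ decide (c = j') = b' := by
  revert j j' b b'; decide

lemma Fin3.exists_ne_decide_eq {j j' : Fin 3} {b b' : Bool}
    (hb : ¬(b = true ∧ b' = true ∧ j = j')) :
    ∃ cu cv : Fin 3, cu ≠ cv ∧ decide (cu = j) = b ∧ decide (cv = j') = b' := by
  revert j j' b b'; decide

theorem stmt_14_general {V : Type} (G : SimpleGraph V)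
    (hrob : ∀ u v : V, ∀ cu cv : Fin 3, (u = v → cu = cv) → (G.Adj u v → cu ≠ cv) →
      ∃ c : V → Fin 3, (∀ x y : V, G.Adj x y → c x ≠ c y) ∧ c u = cu ∧ c v = cv) :
    ∀ (i i' : V) (j j' : Fin 3), (i, j) ≠ (i', j') →
      ∀ b b' : Bool,
        ¬(b = true ∧ b' = true ∧ (i = i' ∨ (j = j' ∧ G.Adj i i'))) →
        ∃ ν : V × Fin 3 → Bool, CSat G ν ∧ ν (i, j) = b ∧ ν (i', j') = b' := by
  intro i i' j j' hne b b' hclash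
  obtain ⟨cu, cv, hsame, hadj, hb, hb'⟩ : ∃ cu cv : Fin 3, (i = i' → cu = cv) ∧
      (G.Adj i i' → cu ≠ cv) ∧ decide (cu = j) = b ∧ decide (cv = j') = b' := by
    by_cases hii : i = i'
    · subst hii
      have hj : j ≠ j' := fun h => hne (by rw [h])
      obtain ⟨c, hcj, hcj'⟩ := Fin3.exists_decide_eq_pair hj
        (by tauto : ¬(b = true ∧ b' = true))
      exact ⟨c, c, fun _ => rfl, fun h => (G.irrefl h).elim, hcj, hcj'⟩
    by_cases hadj_ii' : G.Adj i i'
    · obtain ⟨cu, cv, hcuv, hcu, hcv⟩ :=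
        Fin3.exists_ne_decide_eq (by tauto : ¬(b = true ∧ b' = true ∧ j = j'))
      exact ⟨cu, cv, (absurd · hii), fun _ => hcuv, hcu, hcv⟩
    · obtain ⟨cu, hcu⟩ := exists_decide_eq j b
      obtain ⟨cv, hcv⟩ := exists_decide_eq j' b'
      exact ⟨cu, cv, (absurd · hii), (absurd · hadj_ii'), hcu, hcv⟩
  obtain ⟨c, hc, hci, hci'⟩ := hrob i i' cu cv hsame hadj
  exact ⟨_, csat_decide_eq_of_proper hc, by simp [hci, hb], by simp [hci', hb']⟩

/-- Let `G` be a simple graph in which every edge lies in a 3-clique and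
which is 2-robustly 3-colourable. Then `C(G)` is 2-robustly 1-in-3 satisfiable: for any
two distinct variables `(i,j)`, `(i',j')` and Boolean values `b`, `b'` which do not assign
`true` to two variables occurring together in a clause (i.e. not both `true` with `i = i'`
or with `j = j'` and `i` adjacent to `i'`), some 1-in-3 satisfying assignment takes these
values. -/
theorem stmt_14 {V : Type} (G : SimpleGraph V)
    (htri : ∀ u v : V, G.Adj u v → ∃ w : V, G.Adj u w ∧ G.Adj v w)
    (hrob : ∀ u v : V, ∀ cu cv : Fin 3, (u = v → cu = cv) → (G.Adj u v → cu ≠ cv) →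
      ∃ c : V → Fin 3, (∀ x y : V, G.Adj x y → c x ≠ c y) ∧ c u = cu ∧ c v = cv) :
    ∀ (i i' : V) (j j' : Fin 3), (i, j) ≠ (i', j') →
      ∀ b b' : Bool,
        ¬(b = true ∧ b' = true ∧ (i = i' ∨ (j = j' ∧ G.Adj i i'))) →
        ∃ ν : V × Fin 3 → Bool, CSat G ν ∧ ν (i, j) = b ∧ ν (i', j') = b' :=
  stmt_14_general G hrob
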